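/- arXiv:1910.06934 — 2 statements merged into one kernel-verified Lean document; each statement's English description precedes it below -/
import Mathlib

section
/- Let L be a real symmetric n×n matrix that is conditionally positive semidefinite. Then the matrix with entries exp(L_{i,j}) (the entrywise exponential of L) is positive semidefinite. -/
/-- A real symmetric matrix `L` is conditionally positive semidefinite if
`∑ i j, c i * c j * L i j ≥ 0` for all real vectors `c` with `∑ i, c i = 0`. -/
def CondPosSemidef {m : ℕ} (L : Matrix (Fin m) (Fin m) ℝ) : Prop :=
  ∀ c : Fin m → ℝ, (∑ i, c i) = 0 → 0 ≤ ∑ i, ∑ j, c i * c j * L i j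

/-- A real symmetric matrix `M` is positive semidefinite if
`∑ i j, c i * c j * M i j ≥ 0` for all real vectors `c`. -/
def PosSemidefQuad {m : ℕ} (M : Matrix (Fin m) (Fin m) ℝ) : Prop :=
  ∀ c : Fin m → ℝ, 0 ≤ ∑ i, ∑ j, c i * c j * M i j

/-!
Fix an index `z`. Conditional positivity of `L` says exactly that the matrix
`K i j = L i j - L z j - L i z + L z z` is positive semidefinite, since its quadratic form at
`x` is that of `L` at `x - (∑ i, x i) • Pi.single z 1`, a vector with zero sum. By the Schur
product theorem all entrywise powers of `K` are positive semidefinite, hence so is the entrywise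
exponential `exp ∘ K`, a limit of their nonnegative combinations. Finally
`exp (L i j) = a i * a j * exp (K i j)` with `a i = exp (L i z - L z z / 2)`, which is the
Hadamard product of `exp ∘ K` with the positive semidefinite matrix `vecMulVec a a`.
-/

open Matrix
open scoped Nat

namespace Matrix

variable {ι : Type*} [Fintype ι]

theorem sum_sum_mul_mul_eq_dotProduct_mulVec (M : Matrix ι ι ℝ) (c : ι → ℝ) :
    ∑ i, ∑ j, c i * c j * M i j = c ⬝ᵥ M *ᵥ c := by
  simp only [dotProduct, mulVec, Finset.mul_sum]
  exact Finset.sum_congr rfl fun i _ => Finset.sum_congr rfl fun j _ => by ring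

theorem PosSemidef.map_pow {K : Matrix ι ι ℝ} (hK : K.PosSemidef) (k : ℕ) :
    (K.map (· ^ k)).PosSemidef := by
  induction k with
  | zero => simpa [vecMulVec, Matrix.map] using posSemidef_vecMulVec_self_star (1 : ι → ℝ)
  | succ k ih =>
    have hsucc : K.map (· ^ (k + 1)) = K.map (· ^ k) ⊙ K := by ext i j; simp [pow_succ]
    rw [hsucc]
    exact ih.hadamard hK

theorem PosSemidef.map_exp {K : Matrix ι ι ℝ} (hK : K.PosSemidef) :
    (K.map Real.exp).PosSemidef := by
  refine posSemidef_iff_dotProduct_mulVec.2 ⟨hK.isHermitian.map _ fun _ => rfl, fun x => ?_⟩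
  rw [star_trivial, ← sum_sum_mul_mul_eq_dotProduct_mulVec]
  have hsum : HasSum (fun k => (∑ i, ∑ j, x i * x j * K i j ^ k) / (k ! : ℝ))
      (∑ i, ∑ j, x i * x j * Real.exp (K i j)) := by
    simp_rw [Finset.sum_div, mul_div_assoc, Real.exp_eq_exp_ℝ]
    exact hasSum_sum fun i _ => hasSum_sum fun j _ =>
      (NormedSpace.expSeries_div_hasSum_exp (K i j)).mul_left _
  refine hsum.nonneg fun k => div_nonneg ?_ (Nat.cast_nonneg _)
  have hpow := (hK.map_pow k).dotProduct_mulVec_nonneg x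
  rwa [star_trivial, ← sum_sum_mul_mul_eq_dotProduct_mulVec] at hpow

theorem PosSemidef.posSemidefQuad {m : ℕ} {M : Matrix (Fin m) (Fin m) ℝ} (hM : M.PosSemidef) :
    PosSemidefQuad M := fun c => by
  simpa [sum_sum_mul_mul_eq_dotProduct_mulVec] using hM.dotProduct_mulVec_nonneg c

end Matrix

namespace CondPosSemidef

variable {m : ℕ} {L : Matrix (Fin m) (Fin m) ℝ}

theorem posSemidef_transpose_mul_mul {κ : Type*} [Fintype κ] (hL : CondPosSemidef L)
    (hsymm : L.IsSymm) {P : Matrix (Fin m) κ ℝ} (hP : 1 ᵥ* P = 0) :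
    (Pᵀ * L * P).PosSemidef := by
  refine posSemidef_iff_dotProduct_mulVec.2 ⟨?_, fun x => ?_⟩
  · rw [isHermitian_iff_isSymm]
    simp [IsSymm, transpose_mul, hsymm.eq, Matrix.mul_assoc]
  · have hsum : ∑ i, (P *ᵥ x) i = 0 := by
      rw [← one_dotProduct, dotProduct_mulVec, hP, zero_dotProduct]
    rw [star_trivial, ← mulVec_mulVec, ← mulVec_mulVec, dotProduct_mulVec, vecMul_transpose,
      ← sum_sum_mul_mul_eq_dotProduct_mulVec]
    exact hL _ hsum

theorem posSemidef_recenter (hL : CondPosSemidef L) (hsymm : L.IsSymm) (z : Fin m) :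
    (of fun i j => L i j - L z j - L i z + L z z).PosSemidef := by
  -- `P *ᵥ x = x - (∑ i, x i) • Pi.single z 1`
  set P : Matrix (Fin m) (Fin m) ℝ := 1 - replicateCol (Fin m) (Pi.single z 1)
  have hP : 1 ᵥ* P = 0 := by
    ext j
    simp [P, vecMul, dotProduct, one_apply]
  have hK : (of fun i j => L i j - L z j - L i z + L z z) = Pᵀ * L * P := by
    ext i j
    simp only [of_apply, transpose_sub, transpose_one, transpose_replicateCol, Matrix.sub_mul,
      one_mul, mul_apply, Matrix.sub_apply, replicateRow_apply, Pi.single_apply, ite_mul, zero_mul,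
      Finset.sum_ite_eq', Finset.mem_univ, ↓reduceIte, one_apply, replicateCol_apply, mul_sub,
      mul_ite, mul_one, mul_zero, Finset.sum_sub_distrib, P]
    ring
  rw [hK]
  exact hL.posSemidef_transpose_mul_mul hsymm hP

end CondPosSemidef

/-- If a real symmetric `n × n` matrix `L` is conditionally positive semidefinite, then
its entrywise exponential `(exp (L i j))` is positive semidefinite. -/
theorem entrywise_exp_posSemidef_of_cpd (n : ℕ)
    (L : Matrix (Fin n) (Fin n) ℝ) (hsymm : L.IsSymm) (hcpd : CondPosSemidef L) :
    PosSemidefQuad (Matrix.of fun i j => Real.exp (L i j)) := by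
  rcases isEmpty_or_nonempty (Fin n) with _ | ⟨⟨z⟩⟩
  · intro c
    simp
  set a : Fin n → ℝ := fun i => Real.exp (L i z - L z z / 2)
  have hfactor : (of fun i j => Real.exp (L i j)) =
      vecMulVec a (star a) ⊙ (of fun i j => L i j - L z j - L i z + L z z).map Real.exp := by
    ext i j
    simp only [a, of_apply, hadamard_apply, vecMulVec_apply, map_apply, star_trivial,
      ← Real.exp_add, hsymm.apply z j]
    congr 1
    ring
  rw [hfactor]
  exact ((posSemidef_vecMulVec_self_star a).hadamard
    (hcpd.posSemidef_recenter hsymm z).map_exp).posSemidefQuad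
end

section
/- Let K be a real symmetric n×n matrix. Then K is conditionally positive semidefinite if and only if for every real α > 0 the matrix with entries exp(α K_{i,j}) (the entrywise exponential of αK) is positive semidefinite. -/
open Matrix Set Filter
open scoped ComplexOrder

theorem Matrix.PosSemidef.map_pow_s2 {ι 𝕜 : Type*} [Finite ι] [RCLike 𝕜]
    {A : Matrix ι ι 𝕜} (hA : A.PosSemidef) (k : ℕ) : (A.map (· ^ k)).PosSemidef := by
  induction k with
  | zero => simpa [vecMulVec, Matrix.map] using posSemidef_vecMulVec_self_star (1 : ι → 𝕜)
  | succ k ih =>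
    have hsucc : A.map (· ^ (k + 1)) = A.map (· ^ k) ⊙ A := by ext; simp [pow_succ]
    exact hsucc ▸ ih.hadamard hA

theorem Matrix.PosSemidef.map_exp_s2 {ι : Type*} [Fintype ι] {A : Matrix ι ι ℝ}
    (hA : A.PosSemidef) : (A.map Real.exp).PosSemidef := by
  have hsymm : A.IsSymm := isHermitian_iff_isSymm.1 hA.isHermitian
  refine .of_dotProduct_mulVec_nonneg (isHermitian_iff_isSymm.2 (hsymm.map _)) fun x => ?_
  have hseries : HasSum (fun k => star x ⬝ᵥ (A.map (· ^ k) *ᵥ x) / k.factorial)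
      (star x ⬝ᵥ (A.map Real.exp *ᵥ x)) := by
    simp only [star_trivial, dotProduct, mulVec, Finset.sum_div, Finset.mul_sum, map_apply]
    refine hasSum_sum fun i _ => hasSum_sum fun j _ => ?_
    have hexp : HasSum (fun k : ℕ => A i j ^ k / k.factorial) (Real.exp (A i j)) := by
      rw [Real.exp_eq_exp_ℝ]
      exact NormedSpace.expSeries_div_hasSum_exp _
    exact ((hexp.mul_right (x j)).mul_left (x i)).congr_fun fun k => by ring
  exact hseries.nonneg fun k =>
    div_nonneg ((hA.map_pow_s2 k).dotProduct_mulVec_nonneg x) (by positivity)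

theorem IsLocalMinOn.nonneg_of_hasDerivWithinAt_Ici {f : ℝ → ℝ} {f' a : ℝ}
    (h : IsLocalMinOn f (Ici a) a) (hf : HasDerivWithinAt f f' (Ici a) a) : 0 ≤ f' := by
  have hcone : (1 : ℝ) ∈ posTangentConeAt (Ici a) a :=
    one_mem_posTangentConeAt_iff_frequently.2 (Eventually.frequently
      (eventually_nhdsWithin_of_forall fun _ hx => Ioi_subset_Ici_self hx))
  simpa using h.hasFDerivWithinAt_nonneg hf.hasFDerivWithinAt hcone

section Centering

variable {ι : Type*}

def centeredAt (L : Matrix ι ι ℝ) (i₀ : ι) : Matrix ι ι ℝ :=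
  of fun i j => L i j - L i i₀ - L i₀ j + L i₀ i₀

theorem dotProduct_mulVec_centeredAt [Fintype ι] [DecidableEq ι] (L : Matrix ι ι ℝ)
    (i₀ : ι) (c : ι → ℝ) :
    c ⬝ᵥ centeredAt L i₀ *ᵥ c =
      (c - Pi.single i₀ (∑ i, c i)) ⬝ᵥ L *ᵥ (c - Pi.single i₀ (∑ i, c i)) := by
  simp only [centeredAt, dotProduct, mulVec, of_apply, Pi.sub_apply,
    Pi.single_apply, add_mul, sub_mul, mul_add, mul_sub, Finset.sum_add_distrib,
    Finset.sum_sub_distrib, ← Finset.mul_sum, ← Finset.sum_mul, mul_ite, ite_mul,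
    mul_zero, zero_mul, Finset.sum_ite_eq', Finset.mem_univ, ↓reduceIte]
  ring

theorem isSymm_centeredAt {L : Matrix ι ι ℝ} (hL : L.IsSymm) (i₀ : ι) :
    (centeredAt L i₀).IsSymm := by
  ext i j
  simp only [centeredAt, transpose_apply, of_apply]
  rw [hL.apply i j, hL.apply i₀ j, hL.apply i i₀]
  ring

theorem Matrix.IsSymm.map_exp_eq_diagonal_mul_centeredAt [Fintype ι] [DecidableEq ι]
    {L : Matrix ι ι ℝ} (hL : L.IsSymm) (i₀ : ι) :
    L.map Real.exp = diagonal (fun i => Real.exp (L i i₀ - L i₀ i₀ / 2)) *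
      (centeredAt L i₀).map Real.exp *
        (diagonal fun i => Real.exp (L i i₀ - L i₀ i₀ / 2))ᴴ := by
  ext i j
  simp only [diagonal_conjTranspose, star_trivial, mul_diagonal, diagonal_mul, map_apply,
    centeredAt, of_apply, ← Real.exp_add, hL.apply i₀ j]
  congr 1
  ring

end Centering

section CondPosSemidef

variable {m : ℕ}

theorem sum_sum_mul_eq_dotProduct_mulVec (M : Matrix (Fin m) (Fin m) ℝ) (c : Fin m → ℝ) :
    ∑ i, ∑ j, c i * c j * M i j = c ⬝ᵥ M *ᵥ c := by
  simp only [dotProduct, mulVec, Finset.mul_sum]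
  exact Finset.sum_congr rfl fun i _ => Finset.sum_congr rfl fun j _ => by ring

theorem Matrix.PosSemidef.posSemidefQuad_s2 {M : Matrix (Fin m) (Fin m) ℝ} (hM : M.PosSemidef) :
    PosSemidefQuad M := fun c => by
  simpa [sum_sum_mul_eq_dotProduct_mulVec] using hM.dotProduct_mulVec_nonneg c

theorem CondPosSemidef.smul {L : Matrix (Fin m) (Fin m) ℝ} (hL : CondPosSemidef L) {α : ℝ}
    (hα : 0 ≤ α) : CondPosSemidef (α • L) := fun c hc => by
  simpa only [Matrix.smul_apply, smul_eq_mul, Finset.mul_sum, mul_left_comm] using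
    mul_nonneg hα (hL c hc)

theorem CondPosSemidef.posSemidef_centeredAt {L : Matrix (Fin m) (Fin m) ℝ}
    (hL : CondPosSemidef L) (hsymm : L.IsSymm) (i₀ : Fin m) : (centeredAt L i₀).PosSemidef := by
  refine .of_dotProduct_mulVec_nonneg (isHermitian_iff_isSymm.2 (isSymm_centeredAt hsymm i₀))
    fun c => ?_
  have hsum : ∑ i, (c - Pi.single i₀ (∑ i, c i) : Fin m → ℝ) i = 0 := by
    simp only [Pi.sub_apply, Finset.sum_sub_distrib, Finset.sum_pi_single', Finset.mem_univ,
      if_true, sub_self]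
  rw [star_trivial, dotProduct_mulVec_centeredAt, ← sum_sum_mul_eq_dotProduct_mulVec]
  exact hL _ hsum

theorem CondPosSemidef.posSemidefQuad_map_exp {L : Matrix (Fin m) (Fin m) ℝ}
    (hL : CondPosSemidef L) (hsymm : L.IsSymm) : PosSemidefQuad (L.map Real.exp) := by
  rcases isEmpty_or_nonempty (Fin m) with _ | ⟨⟨i₀⟩⟩
  · intro c
    simp
  · rw [hsymm.map_exp_eq_diagonal_mul_centeredAt i₀]
    exact ((hL.posSemidef_centeredAt hsymm i₀).map_exp_s2.mul_mul_conjTranspose_same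
      _).posSemidefQuad_s2

theorem condPosSemidef_of_forall_posSemidefQuad_exp {K : Matrix (Fin m) (Fin m) ℝ}
    (h : ∀ α : ℝ, 0 < α → PosSemidefQuad (of fun i j => Real.exp (α * K i j))) :
    CondPosSemidef K := by
  intro c hc
  set f : ℝ → ℝ := fun α => ∑ i, ∑ j, c i * c j * Real.exp (α * K i j)
  have hf : HasDerivAt f (∑ i, ∑ j, c i * c j * K i j) 0 := by
    refine HasDerivAt.fun_sum fun i _ => HasDerivAt.fun_sum fun j _ => ?_
    simpa using ((hasDerivAt_mul_const (x := 0) (K i j)).exp).const_mul (c i * c j)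
  have hf0 : f 0 = 0 := by simp [f, ← Finset.mul_sum, hc]
  have hmin : IsMinOn f (Ici 0) 0 := isMinOn_iff.2 fun α hα => by
    rcases (mem_Ici.1 hα).eq_or_lt with rfl | hpos
    · exact le_rfl
    · simpa [hf0] using h α hpos c
  exact hmin.localize.nonneg_of_hasDerivWithinAt_Ici hf.hasDerivWithinAt

end CondPosSemidef

/-- **Schoenberg's theorem**: a real symmetric `n × n` matrix `K` is conditionally positive
semidefinite if and only if, for every real `α > 0`, the entrywise exponential
`(exp (α * K i j))` is positive semidefinite. -/
theorem schoenberg_cpd_iff_entrywise_exp_posSemidef (n : ℕ)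
    (K : Matrix (Fin n) (Fin n) ℝ) (hsymm : K.IsSymm) :
    CondPosSemidef K ↔
      ∀ α : ℝ, 0 < α → PosSemidefQuad (Matrix.of fun i j => Real.exp (α * K i j)) :=
  ⟨fun hK α hα => (hK.smul hα.le).posSemidefQuad_map_exp (hsymm.smul α),
    condPosSemidef_of_forall_posSemidefQuad_exp⟩
end
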